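/- Let P be a finite graded poset of level r, i.e., there is a function d : P → {1,…,r} such that d⁻¹(1) and d⁻¹(r) are nonempty and d(y) = d(x) + 1 whenever y covers x. Assume moreover that d⁻¹(1) equals the set of minimal elements of P and d⁻¹(r) equals the set of maximal elements of P. Then the reverse operator 𝔛 has an orbit of cardinality r + 1 on the set of antichains of P; namely, 𝔛(d⁻¹(i)) = d⁻¹(i−1) for i = 2,…,r, 𝔛(d⁻¹(1)) = ∅, and 𝔛(∅) = d⁻¹(r), so that {∅, d⁻¹(r), …, d⁻¹(1)} is an 𝔛-orbit. -/

import Mathlib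

open Finset

variable {P : Type*} [Fintype P] [DecidableEq P] [PartialOrder P]
  [DecidableRel ((· ≤ ·) : P → P → Prop)]

/-- The upper ideal (filter) generated by a subset `Γ` of a finite poset `P`. -/
def upIdeal (Γ : Finset P) : Finset P :=
  Finset.univ.filter (fun x => ∃ γ ∈ Γ, γ ≤ x)

/-- The set of maximal elements of a finite subset `S` of a poset. -/
def maxOf (S : Finset P) : Finset P :=
  S.filter (fun x => ∀ y ∈ S, x ≤ y → y = x)

/-- The reverse operator `𝔛` sending an antichain `Γ` to the set of maximal
elements of `P \ I(Γ)`. -/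
def Xrev (Γ : Finset P) : Finset P :=
  maxOf (Finset.univ \ upIdeal Γ)

/-- The level set `d⁻¹(i)` of a grading function `d`. -/
def lev (d : P → ℕ) (i : ℕ) : Finset P :=
  Finset.univ.filter (fun x => d x = i)

/-!
Because `d` rises by one along every cover, it is strictly monotone; because only minimal
elements have level `1`, every element of level at least `i ≥ 1` lies above an element of
level exactly `i`. Hence the up-set of `d⁻¹(i + 1)` is `{x | i < d x}`, and the maximal
elements of its complement `{x | d x ≤ i}` are exactly `d⁻¹(i)`: an element of level `< i ≤ r`
is not maximal in `P`, so it has an upper cover, which lies one level higher. Reading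
`d⁻¹(r + 1) = ∅ = d⁻¹(0)`, the operator `𝔛` therefore walks down the levels
`∅ = d⁻¹(r + 1) ↦ d⁻¹(r) ↦ ⋯ ↦ d⁻¹(1) ↦ d⁻¹(0) = ∅`; the levels `1, …, r` are nonempty,
since every level lies below the nonempty top level, so these `r + 1` antichains are distinct.
-/

theorem Function.iterate_apply_eq_of_apply_succ {β : Type*} {f : β → β} {g : ℕ → β} {n : ℕ}
    (h : ∀ i < n, f (g (i + 1)) = g i) : f^[n] (g n) = g 0 := by
  induction n with
  | zero => rfl
  | succ n ih =>
    rw [Function.iterate_succ_apply, h n n.lt_succ_self]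
    exact ih fun i hi => h i (hi.trans n.lt_succ_self)

section Grading

variable {α : Type*} [PartialOrder α] [Finite α] {d : α → ℕ}

theorem strictMono_of_covBy_add_one (hcov : ∀ x y : α, x ⋖ y → d y = d x + 1) :
    StrictMono d := by
  classical
  have := Fintype.ofFinite α
  let _ := Fintype.toLocallyFiniteOrder (α := α)
  exact (strictMono_iff_forall_covBy d).2 fun x y hxy => by rw [hcov x y hxy]; omega

theorem exists_le_level_eq (hcov : ∀ x y : α, x ⋖ y → d y = d x + 1)
    (hmin : ∀ x : α, IsMin x → d x = 1) {i : ℕ} (hi : 1 ≤ i) :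
    ∀ x : α, i ≤ d x → ∃ y ≤ x, d y = i := by
  suffices ∀ k, ∀ x : α, d x = i + k → ∃ y ≤ x, d y = i from
    fun x hx => this (d x - i) x (by omega)
  intro k
  induction k with
  | zero => exact fun x hx => ⟨x, le_rfl, hx⟩
  | succ k ih =>
    intro x hx
    have hx_not_min : ¬ IsMin x := fun h => by have := hmin x h; omega
    obtain ⟨z, hzx⟩ := exists_covBy_of_wellFoundedGT hx_not_min
    obtain ⟨y, hyz, hy⟩ := ih z (by have := hcov z x hzx; omega)
    exact ⟨y, hyz.trans hzx.le, hy⟩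

end Grading

section Levels

variable {α : Type*} [Fintype α] {d : α → ℕ}

@[simp]
theorem mem_lev {i : ℕ} {x : α} : x ∈ lev d i ↔ d x = i := by
  simp [lev]

theorem lev_eq_empty {i : ℕ} (h : ∀ x, d x ≠ i) : lev d i = ∅ := by
  simpa [lev, filter_eq_empty_iff] using h

theorem lev_injOn_nonempty : Set.InjOn (lev d) {i | (lev d i).Nonempty} := by
  rintro i ⟨x, hx⟩ j - hij
  have hxj : x ∈ lev d j := hij ▸ hx
  rw [mem_lev] at hx hxj
  exact hx.symm.trans hxj

theorem lev_nonempty_of_le [PartialOrder α] (hcov : ∀ x y : α, x ⋖ y → d y = d x + 1)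
    (hmin : ∀ x : α, IsMin x → d x = 1) {i j : ℕ} (hi : 1 ≤ i) (hij : i ≤ j)
    (hj : (lev d j).Nonempty) : (lev d i).Nonempty := by
  obtain ⟨x, hx⟩ := hj
  rw [mem_lev] at hx
  obtain ⟨y, -, hy⟩ := exists_le_level_eq hcov hmin hi x (hx ▸ hij)
  exact ⟨y, mem_lev.2 hy⟩

theorem upIdeal_lev_succ [PartialOrder α] [DecidableRel ((· ≤ ·) : α → α → Prop)]
    (hcov : ∀ x y : α, x ⋖ y → d y = d x + 1) (hmin : ∀ x : α, IsMin x → d x = 1) (i : ℕ) :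
    upIdeal (lev d (i + 1)) = univ.filter (fun x => i < d x) := by
  ext x
  simp only [upIdeal, mem_filter, mem_univ, true_and, mem_lev]
  constructor
  · rintro ⟨y, hy, hyx⟩
    rcases hyx.lt_or_eq with hlt | rfl
    · have := strictMono_of_covBy_add_one hcov hlt; omega
    · omega
  · intro hx
    obtain ⟨y, hyx, hy⟩ := exists_le_level_eq hcov hmin (Nat.le_add_left 1 i) x hx
    exact ⟨y, hy, hyx⟩

end Levels

section Reverse

variable {d : P → ℕ}

theorem maxOf_filter_le (hcov : ∀ x y : P, x ⋖ y → d y = d x + 1)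
    {r : ℕ} (hmax : ∀ x : P, IsMax x → d x = r) {i : ℕ} (hir : i ≤ r) :
    maxOf (univ.filter (fun x => d x ≤ i)) = lev d i := by
  ext x
  simp only [maxOf, mem_filter, mem_univ, true_and, mem_lev]
  constructor
  · rintro ⟨hxi, hx_max⟩
    by_contra hne
    have hx_not_max : ¬ IsMax x := fun h => by have := hmax x h; omega
    obtain ⟨y, hxy⟩ := exists_covBy_of_wellFoundedLT hx_not_max
    have hy := hcov x y hxy
    exact hxy.ne (hx_max y (by omega) hxy.le).symm
  · rintro rfl
    refine ⟨le_rfl, fun y hy hxy => ?_⟩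
    by_contra hne
    exact not_lt.2 hy (strictMono_of_covBy_add_one hcov (lt_of_le_of_ne hxy (Ne.symm hne)))

theorem Xrev_lev_succ (hcov : ∀ x y : P, x ⋖ y → d y = d x + 1)
    (hmin : ∀ x : P, IsMin x → d x = 1) {r : ℕ} (hmax : ∀ x : P, IsMax x → d x = r)
    {i : ℕ} (hir : i ≤ r) : Xrev (lev d (i + 1)) = lev d i := by
  have hcompl : univ \ upIdeal (lev d (i + 1)) = univ.filter (fun x => d x ≤ i) := by
    ext x
    simp [upIdeal_lev_succ hcov hmin]
  rw [Xrev, hcompl, maxOf_filter_le hcov hmax hir]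

end Reverse

theorem stmt0_general (r : ℕ) (d : P → ℕ)
    (hd : ∀ x, d x ∈ Finset.Icc 1 r)
    (hrne : (lev d r).Nonempty)
    (hcov : ∀ x y : P, x ⋖ y → d y = d x + 1)
    (hmin : ∀ x : P, d x = 1 ↔ IsMin x)
    (hmax : ∀ x : P, d x = r ↔ IsMax x) :
    (∀ i, 2 ≤ i → i ≤ r → Xrev (lev d i) = lev d (i - 1)) ∧
    Xrev (lev d 1) = (∅ : Finset P) ∧
    Xrev (∅ : Finset P) = lev d r ∧
    Xrev^[r + 1] (∅ : Finset P) = (∅ : Finset P) ∧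
    (insert (∅ : Finset P) ((Finset.Icc 1 r).image (lev d))).card = r + 1 := by
  have hmin' : ∀ x, IsMin x → d x = 1 := fun x => (hmin x).2
  have hmax' : ∀ x, IsMax x → d x = r := fun x => (hmax x).2
  have hstep : ∀ i ≤ r, Xrev (lev d (i + 1)) = lev d i := fun i => Xrev_lev_succ hcov hmin' hmax'
  have hbot : lev d 0 = ∅ := lev_eq_empty fun x => by have := mem_Icc.1 (hd x); omega
  have htop : lev d (r + 1) = ∅ := lev_eq_empty fun x => by have := mem_Icc.1 (hd x); omega
  have hnonempty : ∀ i ∈ Icc 1 r, (lev d i).Nonempty := fun i hi =>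
    lev_nonempty_of_le hcov hmin' (mem_Icc.1 hi).1 (mem_Icc.1 hi).2 hrne
  refine ⟨fun i hi hir => ?_, by simpa [hbot] using hstep 0 r.zero_le,
    by simpa [htop] using hstep r le_rfl, ?_, ?_⟩
  · simpa [Nat.sub_add_cancel (by omega : 1 ≤ i)] using hstep (i - 1) (by omega)
  · have := Function.iterate_apply_eq_of_apply_succ (n := r + 1) fun i hi => hstep i (by omega)
    rwa [htop, hbot] at this
  · rw [card_insert_of_notMem, card_image_of_injOn (lev_injOn_nonempty.mono hnonempty),
      Nat.card_Icc]
    · omega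
    · simp only [mem_image, not_exists, not_and]
      exact fun i hi h => (h ▸ hnonempty i hi).ne_empty rfl

/-- If `P` is a finite poset graded of level `r` by `d : P → {1,…,r}` with
`d⁻¹(1) = P_min` and `d⁻¹(r) = P_max`, then the reverse operator `𝔛` satisfies
`𝔛(d⁻¹(i)) = d⁻¹(i-1)` for `2 ≤ i ≤ r`, `𝔛(d⁻¹(1)) = ∅` and `𝔛(∅) = d⁻¹(r)`;
hence `{∅, d⁻¹(r), …, d⁻¹(1)}` is an `𝔛`-orbit of cardinality `r + 1`. -/
theorem stmt0 (r : ℕ) (hr : 1 ≤ r) (d : P → ℕ)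
    (hd : ∀ x, d x ∈ Finset.Icc 1 r)
    (h1 : (lev d 1).Nonempty) (hrne : (lev d r).Nonempty)
    (hcov : ∀ x y : P, x ⋖ y → d y = d x + 1)
    (hmin : ∀ x : P, d x = 1 ↔ IsMin x)
    (hmax : ∀ x : P, d x = r ↔ IsMax x) :
    (∀ i, 2 ≤ i → i ≤ r → Xrev (lev d i) = lev d (i - 1)) ∧
    Xrev (lev d 1) = (∅ : Finset P) ∧
    Xrev (∅ : Finset P) = lev d r ∧
    Xrev^[r + 1] (∅ : Finset P) = (∅ : Finset P) ∧
    (insert (∅ : Finset P) ((Finset.Icc 1 r).image (lev d))).card = r + 1 :=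
  stmt0_general r d hd hrne hcov hmin hmax
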